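/- Let n ∈ ℕ, 0 < d ≤ n, and 0 < q < p < ∞. Then there is a constant C > 0 (independent of f) such that for every measurable function f on ℝ^n, ‖f‖_{M^p_q(H^d)} ≤ C ‖f‖_{wL^p(H^d)}. -/

import Mathlib

open MeasureTheory Set ENNReal

noncomputable section

/-- The axis-parallel closed cube with corner `a` and side length `l`. -/
def cubeSet (n : ℕ) (a : Fin n → ℝ) (l : ℝ) : Set (Fin n → ℝ) :=
  {x | ∀ i, a i ≤ x i ∧ x i ≤ a i + l}

/-- The `d`-dimensional Hausdorff content of `E ⊆ ℝⁿ`, defined as the infimum of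
`∑ ℓ(Q_j)^d` over all countable coverings of `E` by axis-parallel cubes. -/
def hContent (n : ℕ) (d : ℝ) (E : Set (Fin n → ℝ)) : ℝ≥0∞ :=
  ⨅ (c : ℕ → (Fin n → ℝ) × ℝ) (_ : E ⊆ ⋃ j, cubeSet n (c j).1 (c j).2),
    ∑' j, ENNReal.ofReal ((c j).2) ^ d

/-- The Choquet integral `∫ g dH^d = ∫_0^∞ H^d({x : g x > t}) dt` of a
nonnegative (`ℝ≥0∞`-valued) function. -/
def choquetIntegral (n : ℕ) (d : ℝ) (g : (Fin n → ℝ) → ℝ≥0∞) : ℝ≥0∞ :=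
  ∫⁻ t in Set.Ioi (0 : ℝ), hContent n d {x | ENNReal.ofReal t < g x}

/-- The Choquet `L^p(H^d)` norm of an `ℝ≥0∞`-valued function. -/
def choquetLpNormE (n : ℕ) (d p : ℝ) (g : (Fin n → ℝ) → ℝ≥0∞) : ℝ≥0∞ :=
  (choquetIntegral n d fun x => g x ^ p) ^ (1 / p)

/-- The Choquet `L^p(H^d)` norm of a real-valued function. -/
def choquetLpNorm (n : ℕ) (d p : ℝ) (f : (Fin n → ℝ) → ℝ) : ℝ≥0∞ :=
  choquetLpNormE n d p fun x => ENNReal.ofReal |f x|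

/-- The weak Choquet `L^p(H^d)` norm of an `ℝ≥0∞`-valued function. -/
def weakNormE (n : ℕ) (d p : ℝ) (g : (Fin n → ℝ) → ℝ≥0∞) : ℝ≥0∞ :=
  ⨆ (t : ℝ) (_ : 0 < t),
    ENNReal.ofReal t * hContent n d {x | ENNReal.ofReal t < g x} ^ (1 / p)

/-- The weak Choquet `L^p(H^d)` norm of a real-valued function. -/
def weakChoquetLpNorm (n : ℕ) (d p : ℝ) (f : (Fin n → ℝ) → ℝ) : ℝ≥0∞ :=
  weakNormE n d p fun x => ENNReal.ofReal |f x|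

/-- The Choquet integral `∫_E |f|^q dH^d` over a set `E`. -/
def choquetSetLq (n : ℕ) (d q : ℝ) (E : Set (Fin n → ℝ)) (f : (Fin n → ℝ) → ℝ) : ℝ≥0∞ :=
  choquetIntegral n d (E.indicator fun x => ENNReal.ofReal |f x| ^ q)

/-- The Choquet–Morrey `𝓜^p_q(H^d)` norm of an `ℝ≥0∞`-valued function. -/
def morreyNormE (n : ℕ) (d p q : ℝ) (g : (Fin n → ℝ) → ℝ≥0∞) : ℝ≥0∞ :=
  ⨆ (a : Fin n → ℝ) (l : ℝ) (_ : 0 < l),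
    ENNReal.ofReal (l ^ (d / p - d / q)) *
      (choquetIntegral n d ((cubeSet n a l).indicator fun x => g x ^ q)) ^ (1 / q)

/-- The Choquet–Morrey `𝓜^p_q(H^d)` norm of a real-valued function. -/
def morreyNorm (n : ℕ) (d p q : ℝ) (f : (Fin n → ℝ) → ℝ) : ℝ≥0∞ :=
  morreyNormE n d p q fun x => ENNReal.ofReal |f x|

/-- The Lorentz `L^{p,r}(H^d)` quasinorm of a real-valued function. -/
def lorentzNorm (n : ℕ) (d p r : ℝ) (f : (Fin n → ℝ) → ℝ) : ℝ≥0∞ :=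
  (∫⁻ t in Set.Ioi (0 : ℝ),
      ((ENNReal.ofReal t) ^ p * hContent n d {x | t < |f x|}) ^ (r / p) *
        (ENNReal.ofReal t)⁻¹) ^ (1 / r)

/-- The fractional maximal operator `M_α` (with values in `ℝ≥0∞`). -/
def fracMaximal (n : ℕ) (α : ℝ) (f : (Fin n → ℝ) → ℝ) (x : Fin n → ℝ) : ℝ≥0∞ :=
  ⨆ (a : Fin n → ℝ) (l : ℝ) (_ : 0 < l) (_ : x ∈ cubeSet n a l),
    ENNReal.ofReal (l ^ (α - (n : ℝ))) * ∫⁻ y in cubeSet n a l, ENNReal.ofReal |f y|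

/-- The Euclidean norm on `Fin n → ℝ`. -/
def euclNorm {n : ℕ} (x : Fin n → ℝ) : ℝ := Real.sqrt (∑ i, x i ^ 2)

/-- The fractional integral operator `I_α`. -/
def fracIntegral (n : ℕ) (α : ℝ) (f : (Fin n → ℝ) → ℝ) (x : Fin n → ℝ) : ℝ :=
  ∫ y, f y / euclNorm (x - y) ^ ((n : ℝ) - α)


/-! On a cube `Q` of side `l`, the level set `{|f|^q 𝟙_Q > t}` has content at most `l^d`
(it lies in `Q`) and at most `‖f‖_{wL^p}^p t^{-p/q}` (it lies in `{|f| > t^{1/q}}`).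
Integrating the minimum of these two bounds over `t > 0`, with the crossover at
`t = (‖f‖^p / l^d)^{q/p}`, gives `∫_Q |f|^q dH^d ≤ p/(p-q) · l^{d(1-q/p)} ‖f‖_{wL^p}^q`,
and after taking `q`-th roots the Morrey weight `l^{d/p-d/q}` cancels the power of `l`. -/

theorem setOf_lt_indicator_rpow_subset {α : Type*} {q : ℝ} (hq : 0 < q) (g : α → ℝ≥0∞)
    (Q : Set α) {t : ℝ} (ht : 0 < t) :
    {x | ENNReal.ofReal t < Q.indicator (fun x => g x ^ q) x} ⊆
      Q ∩ {x | ENNReal.ofReal (t ^ q⁻¹) < g x} := by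
  intro x (hx : ENNReal.ofReal t < Q.indicator (fun x => g x ^ q) x)
  by_cases hxQ : x ∈ Q
  · rw [indicator_of_mem hxQ] at hx
    refine ⟨hxQ, ?_⟩
    calc ENNReal.ofReal (t ^ q⁻¹) = ENNReal.ofReal t ^ q⁻¹ := (ofReal_rpow_of_pos ht).symm
      _ < (g x ^ q) ^ q⁻¹ := rpow_lt_rpow hx (inv_pos.2 hq)
      _ = g x := rpow_rpow_inv hq.ne' _
  · simp [hxQ] at hx

theorem lintegral_Ioi_ofReal_rpow_neg {r T : ℝ} (hr : 1 < r) (hT : 0 < T) :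
    ∫⁻ t in Ioi T, ENNReal.ofReal (t ^ (-r)) = ENNReal.ofReal (T ^ (1 - r) / (r - 1)) := by
  have hint : IntegrableOn (fun t : ℝ => t ^ (-r)) (Ioi T) :=
    integrableOn_Ioi_rpow_of_lt (by linarith) hT
  rw [← ofReal_integral_eq_lintegral_ofReal hint, integral_Ioi_rpow_of_lt (by linarith) hT]
  · congr 1
    rw [show -r + 1 = 1 - r by ring, neg_div, ← div_neg, neg_sub]
  · filter_upwards [ae_restrict_mem measurableSet_Ioi] with t ht
    exact Real.rpow_nonneg (hT.trans ht).le _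

theorem lintegral_Ioi_zero_le_of_le_min {φ : ℝ → ℝ≥0∞} {A B r : ℝ} (hA : 0 < A) (hB : 0 ≤ B)
    (hr : 1 < r) (hφA : ∀ t, 0 < t → φ t ≤ ENNReal.ofReal A)
    (hφB : ∀ t, 0 < t → φ t ≤ ENNReal.ofReal B * ENNReal.ofReal (t ^ (-r))) :
    ∫⁻ t in Ioi 0, φ t ≤ ENNReal.ofReal (r / (r - 1) * A ^ (1 - r⁻¹) * B ^ r⁻¹) := by
  rcases hB.eq_or_lt with rfl | hB
  · refine (setLIntegral_mono (g := fun _ => 0) measurable_const fun t ht => ?_).trans (by simp)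
    simpa using hφB t ht
  -- split at the crossover point `T`, where `A = B * T ^ (-r)`
  set T := (B / A) ^ r⁻¹ with hT_def
  have hT : 0 < T := by positivity
  have hr0 : 0 < r := zero_lt_one.trans hr
  have hcross : B * T ^ (1 - r) = A * T := by
    rw [Real.rpow_sub hT, Real.rpow_one, hT_def, Real.rpow_inv_rpow (by positivity) hr0.ne']
    field_simp
  have hAT : A * T = A ^ (1 - r⁻¹) * B ^ r⁻¹ := by
    rw [hT_def, Real.div_rpow hB.le hA.le, Real.rpow_sub hA, Real.rpow_one]
    ring
  calc ∫⁻ t in Ioi 0, φ t = (∫⁻ t in Ioc 0 T, φ t) + ∫⁻ t in Ioi T, φ t := by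
        rw [← Ioc_union_Ioi_eq_Ioi hT.le, lintegral_union measurableSet_Ioi Ioc_disjoint_Ioi_same]
    _ ≤ (∫⁻ _ in Ioc 0 T, ENNReal.ofReal A) +
          ∫⁻ t in Ioi T, ENNReal.ofReal B * ENNReal.ofReal (t ^ (-r)) :=
        add_le_add (setLIntegral_mono measurable_const fun t ht => hφA t ht.1)
          (setLIntegral_mono (by fun_prop) fun t ht => hφB t (hT.trans ht))
    _ = ENNReal.ofReal (A * T + B * (T ^ (1 - r) / (r - 1))) := by
        rw [setLIntegral_const, Real.volume_Ioc, sub_zero, lintegral_const_mul _ (by fun_prop),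
          lintegral_Ioi_ofReal_rpow_neg hr hT, ← ofReal_mul hA.le, ← ofReal_mul hB.le,
          ← ofReal_add (by positivity) (by have := sub_pos.2 hr; positivity)]
    _ = ENNReal.ofReal (r / (r - 1) * A ^ (1 - r⁻¹) * B ^ r⁻¹) := by
        have hr1 : r - 1 ≠ 0 := (sub_pos.2 hr).ne'
        congr 1
        rw [mul_div_assoc', hcross, mul_assoc, ← hAT]
        field_simp
        ring

section HausdorffContent

variable {n : ℕ} {d : ℝ}

theorem hContent_mono {E F : Set (Fin n → ℝ)} (h : E ⊆ F) : hContent n d E ≤ hContent n d F :=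
  le_iInf₂ fun c hc => iInf₂_le c (h.trans hc)

theorem hContent_cubeSet_le (hd : 0 < d) (a : Fin n → ℝ) (l : ℝ) :
    hContent n d (cubeSet n a l) ≤ ENNReal.ofReal l ^ d := by
  -- cover by the cube itself, padded with cubes of negative side, which count as `0 ^ d = 0`
  let c : ℕ → (Fin n → ℝ) × ℝ := fun j => if j = 0 then (a, l) else (a, -1)
  calc hContent n d (cubeSet n a l) ≤ ∑' j, ENNReal.ofReal (c j).2 ^ d :=
        iInf₂_le c fun x hx => mem_iUnion.2 ⟨0, by simpa [c] using hx⟩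
    _ = ENNReal.ofReal l ^ d := by
        rw [tsum_eq_single 0 fun j hj => by simp [c, hj, hd]]
        simp [c]

theorem hContent_setOf_lt_le_weakNormE {p : ℝ} (hp : 0 < p) (g : (Fin n → ℝ) → ℝ≥0∞) {s : ℝ}
    (hs : 0 < s) :
    hContent n d {x | ENNReal.ofReal s < g x} ≤
      weakNormE n d p g ^ p * ENNReal.ofReal s ^ (-p) := by
  set H := hContent n d {x | ENNReal.ofReal s < g x}
  have hHW : ENNReal.ofReal s * H ^ (1 / p) ≤ weakNormE n d p g :=
    le_iSup₂ (f := fun (t : ℝ) (_ : 0 < t) =>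
      ENNReal.ofReal t * hContent n d {x | ENNReal.ofReal t < g x} ^ (1 / p)) s hs
  have hH : H ^ (1 / p) ≤ weakNormE n d p g / ENNReal.ofReal s :=
    ENNReal.le_div_iff_mul_le (.inl (by simpa using hs)) (.inl ofReal_ne_top) |>.2
      (by rwa [mul_comm])
  calc H = (H ^ (1 / p)) ^ p := by rw [one_div, rpow_inv_rpow hp.ne']
    _ ≤ (weakNormE n d p g / ENNReal.ofReal s) ^ p := by gcongr
    _ = weakNormE n d p g ^ p * ENNReal.ofReal s ^ (-p) := by
        rw [div_rpow_of_nonneg _ _ hp.le, div_eq_mul_inv, rpow_neg]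

theorem choquetIntegral_indicator_cubeSet_rpow_le {p q : ℝ} (hd : 0 < d) (hq : 0 < q)
    (hqp : q < p) (g : (Fin n → ℝ) → ℝ≥0∞) (hg : weakNormE n d p g ≠ ⊤) (a : Fin n → ℝ) {l : ℝ}
    (hl : 0 < l) :
    choquetIntegral n d ((cubeSet n a l).indicator fun x => g x ^ q) ≤
      ENNReal.ofReal (p / (p - q) * l ^ (d * (1 - q / p)) * (weakNormE n d p g).toReal ^ q) := by
  have hp : 0 < p := hq.trans hqp
  set w := (weakNormE n d p g).toReal
  set F := (cubeSet n a l).indicator fun x => g x ^ q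
  have hcube : ∀ t, 0 < t → hContent n d {x | ENNReal.ofReal t < F x} ≤ ENNReal.ofReal (l ^ d) :=
    fun t ht => calc
      _ ≤ hContent n d (cubeSet n a l) :=
          hContent_mono ((setOf_lt_indicator_rpow_subset hq g _ ht).trans inter_subset_left)
      _ ≤ ENNReal.ofReal l ^ d := hContent_cubeSet_le hd a l
      _ = ENNReal.ofReal (l ^ d) := ofReal_rpow_of_pos hl
  have hweak : ∀ t, 0 < t → hContent n d {x | ENNReal.ofReal t < F x} ≤
      ENNReal.ofReal (w ^ p) * ENNReal.ofReal (t ^ (-(p / q))) := fun t ht => calc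
      _ ≤ hContent n d {x | ENNReal.ofReal (t ^ q⁻¹) < g x} :=
          hContent_mono ((setOf_lt_indicator_rpow_subset hq g _ ht).trans inter_subset_right)
      _ ≤ weakNormE n d p g ^ p * ENNReal.ofReal (t ^ q⁻¹) ^ (-p) :=
          hContent_setOf_lt_le_weakNormE hp g (by positivity)
      _ = ENNReal.ofReal (w ^ p) * ENNReal.ofReal (t ^ (-(p / q))) := by
          rw [← ofReal_toReal hg, ofReal_rpow_of_nonneg toReal_nonneg hp.le,
            ofReal_rpow_of_pos (by positivity), ← Real.rpow_mul ht.le]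
          congr 3
          ring
  calc choquetIntegral n d F
      ≤ ENNReal.ofReal (p / q / (p / q - 1) * (l ^ d) ^ (1 - (p / q)⁻¹) * (w ^ p) ^ (p / q)⁻¹) :=
        lintegral_Ioi_zero_le_of_le_min (by positivity) (by positivity) ((one_lt_div hq).2 hqp)
          hcube hweak
    _ = ENNReal.ofReal (p / (p - q) * l ^ (d * (1 - q / p)) * w ^ q) := by
        have hpq : p / q / (p / q - 1) = p / (p - q) := by
          have := sub_pos.2 hqp
          field_simp
        rw [← Real.rpow_mul hl.le, ← Real.rpow_mul toReal_nonneg, inv_div,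
          mul_div_cancel₀ q hp.ne', hpq]

theorem morreyNormE_le_weakNormE {p q : ℝ} (hd : 0 < d) (hq : 0 < q) (hqp : q < p)
    (g : (Fin n → ℝ) → ℝ≥0∞) :
    morreyNormE n d p q g ≤ ENNReal.ofReal ((p / (p - q)) ^ (1 / q)) * weakNormE n d p g := by
  have hp : 0 < p := hq.trans hqp
  have hpq : 0 < p - q := sub_pos.2 hqp
  have hC : 0 < (p / (p - q)) ^ (1 / q) := by positivity
  rcases eq_or_ne (weakNormE n d p g) ⊤ with hg | hg
  · rw [hg, mul_top (ofReal_pos.2 hC).ne']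
    exact le_top
  set w := (weakNormE n d p g).toReal
  refine iSup_le fun a => iSup_le fun l => iSup_le fun hl => ?_
  have hscale : l ^ (d / p - d / q) * (p / (p - q) * l ^ (d * (1 - q / p)) * w ^ q) ^ (1 / q) =
      (p / (p - q)) ^ (1 / q) * w := by
    have hcancel : l ^ (d / p - d / q) * l ^ (d * (1 - q / p) * (1 / q)) = 1 := by
      have hexp : d / p - d / q + d * (1 - q / p) * (1 / q) = 0 := by
        field_simp
        ring
      rw [← Real.rpow_add hl, hexp, Real.rpow_zero]
    rw [Real.mul_rpow (by positivity) (by positivity), Real.mul_rpow (by positivity) (by positivity),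
      ← Real.rpow_mul hl.le, ← Real.rpow_mul toReal_nonneg, mul_one_div_cancel hq.ne',
      Real.rpow_one]
    linear_combination ((p / (p - q)) ^ (1 / q) * w) * hcancel
  calc _ ≤ ENNReal.ofReal (l ^ (d / p - d / q)) *
        ENNReal.ofReal (p / (p - q) * l ^ (d * (1 - q / p)) * w ^ q) ^ (1 / q) := by
        gcongr
        exact choquetIntegral_indicator_cubeSet_rpow_le hd hq hqp g hg a hl
    _ = ENNReal.ofReal ((p / (p - q)) ^ (1 / q) * w) := by
        rw [ofReal_rpow_of_nonneg (by positivity) (by positivity), ← ofReal_mul (by positivity),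
          hscale]
    _ = ENNReal.ofReal ((p / (p - q)) ^ (1 / q)) * weakNormE n d p g := by
        rw [ofReal_mul hC.le, ofReal_toReal hg]

end HausdorffContent

theorem weak_embeds_morrey_general (n : ℕ) (d p q : ℝ)
    (hd : 0 < d) (hq : 0 < q) (hqp : q < p) :
    ∃ C : ℝ, 0 < C ∧ ∀ f : (Fin n → ℝ) → ℝ, Measurable f →
      morreyNorm n d p q f ≤ ENNReal.ofReal C * weakChoquetLpNorm n d p f :=
  ⟨(p / (p - q)) ^ (1 / q), Real.rpow_pos_of_pos (div_pos (hq.trans hqp) (sub_pos.2 hqp)) _,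
    fun _ _ => morreyNormE_le_weakNormE hd hq hqp _⟩

/-- (M2): `wL^p(H^d) ↪ 𝓜^p_q(H^d)` for `0 < q < p < ∞`. -/
theorem weak_embeds_morrey (n : ℕ) (d p q : ℝ)
    (hd : 0 < d) (hdn : d ≤ n) (hq : 0 < q) (hqp : q < p) :
    ∃ C : ℝ, 0 < C ∧ ∀ f : (Fin n → ℝ) → ℝ, Measurable f →
      morreyNorm n d p q f ≤ ENNReal.ofReal C * weakChoquetLpNorm n d p f :=
  weak_embeds_morrey_general n d p q hd hq hqp

end
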